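/- Let W = W(A,T,φ) be a simple generalized Witt algebra over a field F of characteristic 0 (so A ≠ 0 and φ is nondegenerate). Then every bijective 2-local automorphism of W is a Lie algebra automorphism of W. -/

import Mathlib

/-! Generalized Witt algebras `W(A,T,φ)` over a field `F` of characteristic `0`,
following Djokovic-Zhao. Here `A` is an (additive) abelian group, `T` an
`F`-vector space, and `φ : T × A → F` is `F`-linear in the first variable and
additive in the second (encoded as `φ : T →ₗ[F] (A →+ F)`). -/

namespace GW

variable {F : Type*} [Field F]
variable {A : Type*} [AddCommGroup A]
variable {T : Type*} [AddCommGroup T] [Module F T]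
variable (φ : T →ₗ[F] (A →+ F))

/-- The bracket on finitely supported functions `A →₀ T`: the bilinear extension of
`[t^α a, t^β b] = t^(α+β) (φ a β • b - φ b α • a)`. -/
noncomputable def brk (x y : A →₀ T) : A →₀ T :=
  x.sum fun α a => y.sum fun β b => Finsupp.single (α + β) (φ a β • b - φ b α • a)

lemma brk_zero_left (y : A →₀ T) : brk φ 0 y = 0 := by
  simp [brk]

lemma brk_zero_right (x : A →₀ T) : brk φ x 0 = 0 := by
  simp [brk]

lemma brk_single_single (α β : A) (a b : T) :
    brk φ (Finsupp.single α a) (Finsupp.single β b)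
      = Finsupp.single (α + β) (φ a β • b - φ b α • a) := by
  unfold brk
  rw [Finsupp.sum_single_index, Finsupp.sum_single_index]
  · simp
  · simp

lemma brk_add_left (x x' y : A →₀ T) : brk φ (x + x') y = brk φ x y + brk φ x' y := by
  unfold brk
  rw [Finsupp.sum_add_index']
  · intro α; simp
  · intro α a a'
    rw [← Finsupp.sum_add]
    congr 1
    funext β b
    rw [← Finsupp.single_add]
    congr 1
    simp only [map_add, LinearMap.add_apply, AddMonoidHom.add_apply, add_smul, smul_add]
    abel

lemma brk_add_right (x y y' : A →₀ T) : brk φ x (y + y') = brk φ x y + brk φ x y' := by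
  unfold brk
  rw [← Finsupp.sum_add]
  congr 1
  funext α a
  rw [Finsupp.sum_add_index']
  · intro β; simp
  · intro β b b'
    rw [← Finsupp.single_add]
    congr 1
    simp only [map_add, LinearMap.add_apply, AddMonoidHom.add_apply, add_smul, smul_add]
    abel

lemma brk_neg_swap (x y : A →₀ T) : brk φ y x = - brk φ x y := by
  unfold brk
  rw [Finsupp.sum_comm]
  rw [← Finsupp.sum_neg]
  congr 1
  funext α a
  rw [← Finsupp.sum_neg]
  congr 1
  funext β b
  rw [← Finsupp.single_neg, add_comm β α]
  congr 1
  abel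

lemma brk_smul_right (c : F) (x y : A →₀ T) : brk φ x (c • y) = c • brk φ x y := by
  unfold brk
  rw [Finsupp.smul_sum]
  congr 1
  funext α a
  rw [Finsupp.sum_smul_index', Finsupp.smul_sum]
  · congr 1
    funext β b
    rw [Finsupp.smul_single]
    congr 1
    simp only [map_smul, LinearMap.smul_apply, AddMonoidHom.smul_apply, smul_sub, smul_smul,
      smul_eq_mul]
    rw [mul_comm]
  · intro β; simp

lemma brk_self [CharZero F] (x : A →₀ T) : brk φ x x = 0 := by
  have h : brk φ x x = -brk φ x x := brk_neg_swap φ x x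
  have h2 : (2 : F) • brk φ x x = 0 := by
    rw [two_smul]
    nth_rewrite 2 [h]
    simp
  calc brk φ x x = (2 : F)⁻¹ • ((2 : F) • brk φ x x) :=
        (inv_smul_smul₀ two_ne_zero _).symm
    _ = 0 := by rw [h2, smul_zero]

lemma brk_leibniz (x y z : A →₀ T) :
    brk φ x (brk φ y z) = brk φ (brk φ x y) z + brk φ y (brk φ x z) := by
  induction x using Finsupp.induction_linear with
  | zero => simp [brk_zero_left, brk_zero_right]
  | add f g hf hg =>
      simp only [brk_add_left, brk_add_right, hf, hg]; abel
  | single α a =>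
    induction y using Finsupp.induction_linear with
    | zero => simp [brk_zero_left, brk_zero_right]
    | add f g hf hg =>
        simp only [brk_add_left, brk_add_right, hf, hg]; abel
    | single β b =>
      induction z using Finsupp.induction_linear with
      | zero => simp [brk_zero_left, brk_zero_right]
      | add f g hf hg =>
          simp only [brk_add_left, brk_add_right, hf, hg]; abel
      | single γ c =>
        rw [brk_single_single, brk_single_single, brk_single_single, brk_single_single,
          brk_single_single, brk_single_single]
        rw [show β + (α + γ) = α + β + γ by abel, show α + (β + γ) = α + β + γ by abel,
          ← Finsupp.single_add]
        congr 1
        simp only [map_add, map_sub, map_smul, LinearMap.sub_apply, LinearMap.smul_apply,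
          AddMonoidHom.add_apply, AddMonoidHom.sub_apply, AddMonoidHom.smul_apply,
          smul_eq_mul, smul_sub, sub_smul, add_smul, smul_smul]
        ring_nf
        module

variable (F A T) in
/-- The carrier of the generalized Witt algebra `W(A,T,φ)`: finitely supported
functions from `A` to `T`, where `t^α ∂` corresponds to the function supported
at `α` with value `∂`. -/
@[nolint unusedArguments]
def W (_φ : T →ₗ[F] (A →+ F)) : Type _ := A →₀ T

noncomputable instance : AddCommGroup (W F A T φ) := inferInstanceAs (AddCommGroup (A →₀ T))

noncomputable instance : Module F (W F A T φ) := inferInstanceAs (Module F (A →₀ T))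

/-- The element `t^α ∂` of the generalized Witt algebra. -/
noncomputable def tt (α : A) (d : T) : W F A T φ := Finsupp.single α d

/-- The underlying finitely supported function of an element of `W(A,T,φ)`. -/
def toF (x : W F A T φ) : A →₀ T := x

/-- The Lie ring structure on the generalized Witt algebra `W(A,T,φ)`, with bracket
determined by `[t^α ∂, t^β ∂'] = t^(α+β) (φ(∂,β) • ∂' - φ(∂',α) • ∂)`. -/
noncomputable instance [CharZero F] : LieRing (W F A T φ) :=
  { (inferInstanceAs (AddCommGroup (A →₀ T)) : AddCommGroup (A →₀ T)) with
    bracket := fun x y => brk φ (toF φ x) (toF φ y)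
    add_lie := fun x y z => brk_add_left φ x y z
    lie_add := fun x y z => brk_add_right φ x y z
    lie_self := fun x => brk_self φ x
    leibniz_lie := fun x y z => brk_leibniz φ x y z }

/-- The generalized Witt algebra `W(A,T,φ)` as a Lie algebra over `F`. -/
noncomputable instance [CharZero F] : LieAlgebra F (W F A T φ) :=
  { (inferInstanceAs (Module F (A →₀ T)) : Module F (A →₀ T)) with
    lie_smul := fun c x y => brk_smul_right φ c x y }

@[simp] theorem bracket_tt [CharZero F] (α β : A) (a b : T) :
    ⁅tt φ α a, tt φ β b⁆ = tt φ (α + β) (φ a β • b - φ b α • a) :=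
  brk_single_single φ α β a b

/-- Nondegeneracy of the map `φ`. -/
def Nondeg : Prop :=
  (∀ α : A, (∀ d : T, φ d α = 0) → α = 0) ∧ (∀ d : T, (∀ α : A, φ d α = 0) → d = 0)

/-- `(A', T')` is a nondegenerate pair for `φ`. -/
def NondegPair (A' : AddSubgroup A) (T' : Submodule F T) : Prop :=
  (∀ d ∈ T', (∀ α ∈ A', φ d α = 0) → d = 0) ∧
  (∀ α ∈ A', (∀ d ∈ T', φ d α = 0) → α = 0)

/-- The subset (in fact Lie subalgebra) of `W(A,T,φ)` consisting of the finitely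
supported functions supported in `A'` with values in `T'`. -/
def supportedIn (A' : AddSubgroup A) (T' : Submodule F T) : Set (W F A T φ) :=
  {x | (∀ α : A, toF φ x α ∈ T') ∧ ∀ α : A, α ∉ A' → toF φ x α = 0}

end GW

/-! An automorphism `θ` of `W` maps `W₀ = t^0 T` onto itself, because `W₀` is the set of
ad-locally finite elements: if `x ∉ W₀`, an additive `L : A → ℚ` with a strict positive maximum
`L β₀` on the support of `x` exists, and the iterates `(ad x)ⁿ (t^a d)` have leading terms in the
pairwise distinct degrees `a + n β₀` for a suitable `a`.

Hence `θ` is pinned down on any finite set by a single element `w = t^0 p + e`. If `θ w = w`, then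
comparing degree-`0` parts shows that `θ` fixes `t^0 p`, so it preserves the eigenspaces of
`ad (t^0 p)`; when `φ(p, ·)` separates the support of `e`, the homogeneous components of `e` lie
in distinct eigenspaces and are all fixed. If `e` contains, for each prescribed `t^α v`, components
`t^γ v` and `t^(α-γ) v` with `φ(v, α - 2γ) ≠ 0`, then `t^α v` is a multiple of their bracket and
is fixed as well.

A `2`-local automorphism `Φ` therefore agrees on any finite set with the automorphism that takes
`w` to `Φ w`, so it is additive, homogeneous and preserves brackets. -/

namespace LieAlgebra

variable {R L : Type*} [CommRing R] [LieRing L] [LieAlgebra R L]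

theorem exists_lieEquiv_eqOn_of_twoLocal
    (hfix : ∀ s : Finset L, ∃ w : L, ∀ θ : L ≃ₗ⁅R⁆ L, θ w = w → ∀ x ∈ s, θ x = x)
    {Φ : L → L} (hΦ : ∀ x y : L, ∃ θ : L ≃ₗ⁅R⁆ L, Φ x = θ x ∧ Φ y = θ y) (s : Finset L) :
    ∃ θ : L ≃ₗ⁅R⁆ L, ∀ x ∈ s, Φ x = θ x := by
  obtain ⟨w, hw⟩ := hfix s
  obtain ⟨θ, hθw, -⟩ := hΦ w w
  refine ⟨θ, fun x hx => ?_⟩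
  obtain ⟨θx, hθxw, hθxx⟩ := hΦ w x
  have hfixes : (θx.trans θ.symm) x = x :=
    hw _ (by rw [LieEquiv.trans_apply, ← hθxw, hθw, LieEquiv.symm_apply_apply]) x hx
  rw [hθxx, ← θ.apply_symm_apply (θx x)]
  exact congrArg θ hfixes

theorem exists_lieEquiv_coe_eq_of_twoLocal
    (hfix : ∀ s : Finset L, ∃ w : L, ∀ θ : L ≃ₗ⁅R⁆ L, θ w = w → ∀ x ∈ s, θ x = x)
    {Φ : L → L} (hΦ : ∀ x y : L, ∃ θ : L ≃ₗ⁅R⁆ L, Φ x = θ x ∧ Φ y = θ y)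
    (hbij : Function.Bijective Φ) : ∃ θ : L ≃ₗ⁅R⁆ L, ⇑θ = Φ := by
  classical
  have agree := exists_lieEquiv_eqOn_of_twoLocal hfix hΦ
  let f : L →ₗ⁅R⁆ L :=
    { toFun := Φ
      map_add' := fun a b => by
        obtain ⟨θ, hθ⟩ := agree {a, b, a + b}
        rw [hθ a (by simp), hθ b (by simp), hθ (a + b) (by simp)]
        exact θ.toLinearEquiv.map_add a b
      map_smul' := fun c a => by
        obtain ⟨θ, ha, hca⟩ := hΦ a (c • a)
        rw [hca, ha, RingHom.id_apply]
        exact θ.toLinearEquiv.map_smul c a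
      map_lie' := fun {a b} => by
        obtain ⟨θ, hθ⟩ := agree {a, b, ⁅a, b⁆}
        rw [hθ a (by simp), hθ b (by simp), hθ ⁅a, b⁆ (by simp)]
        exact θ.map_lie a b }
  exact ⟨LieEquiv.ofBijective f hbij, rfl⟩

variable (R) in
def IsAdLocallyFinite (x : L) : Prop :=
  ∀ u : L, ∃ N : Submodule R L, N.FG ∧ u ∈ N ∧ ∀ y ∈ N, ⁅x, y⁆ ∈ N

theorem IsAdLocallyFinite.map {L' : Type*} [LieRing L'] [LieAlgebra R L'] {x : L}
    (hx : IsAdLocallyFinite R x) (e : L ≃ₗ⁅R⁆ L') : IsAdLocallyFinite R (e x) := by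
  intro u
  obtain ⟨N, hFG, hmem, hinv⟩ := hx (e.symm u)
  refine ⟨N.map e.toLinearEquiv.toLinearMap, hFG.map _, ⟨e.symm u, hmem, e.apply_symm_apply u⟩, ?_⟩
  rintro _ ⟨y, hy, rfl⟩
  exact ⟨⁅x, y⁆, hinv y hy, e.map_lie x y⟩

theorem isAdLocallyFinite_of_mem_span_eigenvectors {x : L}
    (h : ∀ u : L, ∃ s : Finset L, u ∈ Submodule.span R (s : Set L) ∧
      ∀ y ∈ s, ∃ c : R, ⁅x, y⁆ = c • y) :
    IsAdLocallyFinite R x := by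
  intro u
  obtain ⟨s, hu, hs⟩ := h u
  refine ⟨Submodule.span R s, Submodule.fg_span s.finite_toSet, hu, fun y hy => ?_⟩
  induction hy using Submodule.span_induction with
  | mem y hy =>
    obtain ⟨c, hc⟩ := hs y hy
    rw [hc]
    exact Submodule.smul_mem _ c (Submodule.subset_span hy)
  | zero => rw [lie_zero]; exact Submodule.zero_mem _
  | add y z _ _ hy hz => rw [lie_add]; exact Submodule.add_mem _ hy hz
  | smul c y _ hy => rw [lie_smul]; exact Submodule.smul_mem _ c hy

end LieAlgebra

theorem LieAlgebra.eqOn_of_sum_eq_of_lie_eq_smul {K L ι : Type*} [Field K] [LieRing L]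
    [LieAlgebra K L] (h : L) {s : Finset ι} {μ : ι → K} (hμ : Set.InjOn μ s) {x y : ι → L}
    (hx : ∀ i ∈ s, ⁅h, x i⁆ = μ i • x i) (hy : ∀ i ∈ s, ⁅h, y i⁆ = μ i • y i)
    (hxy : ∑ i ∈ s, x i = ∑ i ∈ s, y i) : ∀ i ∈ s, x i = y i := by
  have hind := (ad K L h).eigenspaces_iSupIndep.comp (f := fun j : s => μ j)
    fun j k hjk => Subtype.ext (hμ j.2 k.2 hjk)
  rw [iSupIndep_iff_finsetSum_eq_zero_imp_eq_zero] at hind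
  intro i hi
  refine sub_eq_zero.mp (hind Finset.univ (fun j => x j - y j) (fun j _ => ?_) ?_ ⟨i, hi⟩
    (Finset.mem_univ _))
  · simp [lie_sub, hx j j.2, hy j j.2, smul_sub]
  · rw [Finset.sum_coe_sort s (fun j => x j - y j), Finset.sum_sub_distrib, hxy, sub_self]

theorem Module.exists_dual_injOn {K M : Type*} [Field K] [Infinite K] [AddCommGroup M] [Module K M]
    (s : Finset M) : ∃ f : Module.Dual K M, Set.InjOn f s := by
  classical
  let pairs := (s ×ˢ s).filter fun q => q.1 ≠ q.2
  obtain ⟨f, hf⟩ := Module.exists_dual_forall_apply_ne_zero (K := K)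
    (fun q : pairs => q.1.1 - q.1.2) (fun q => sub_ne_zero.mpr (Finset.mem_filter.mp q.2).2)
  refine ⟨f, fun a ha b hb hab => by_contra fun hne => hf ⟨(a, b), ?_⟩ ?_⟩
  · simp_all [pairs]
  · simp [hab]

theorem AddMonoidHom.exists_pos_strictMax {A : Type*} [AddCommGroup A] {S : Finset A}
    {L : A →+ ℚ} (hL : Set.InjOn L (insert 0 S)) {β : A} (hβS : β ∈ S) (hβ : β ≠ 0) :
    ∃ L' : A →+ ℚ, ∃ β₀ ∈ S, 0 < L' β₀ ∧ ∀ γ ∈ S, γ ≠ β₀ → L' γ < L' β₀ := by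
  have of_pos (L' : A →+ ℚ) (hinj : Set.InjOn L' S) (hpos : 0 < L' β) :
      ∃ L' : A →+ ℚ, ∃ β₀ ∈ S, 0 < L' β₀ ∧ ∀ γ ∈ S, γ ≠ β₀ → L' γ < L' β₀ := by
    obtain ⟨β₀, hβ₀, hmax⟩ := S.exists_max_image L' ⟨β, hβS⟩
    exact ⟨L', β₀, hβ₀, hpos.trans_le (hmax β hβS),
      fun γ hγ hne => (hmax γ hγ).lt_of_ne fun h => hne (hinj hγ hβ₀ h)⟩
  have hinjS : Set.InjOn L S := hL.mono (by simp)
  have hLβ : L β ≠ 0 := fun h =>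
    hβ (hL (by simp [hβS]) (by simp) (by rw [h, map_zero]))
  rcases hLβ.lt_or_gt with hneg | hpos
  · exact of_pos (-L) (fun a ha b hb h => hinjS ha hb (neg_inj.mp h)) (by simpa using hneg)
  · exact of_pos L hinjS hpos

namespace GW

open LieAlgebra

variable {F : Type*} [Field F]
variable {A : Type*} [AddCommGroup A]
variable {T : Type*} [AddCommGroup T] [Module F T]
variable (φ : T →ₗ[F] (A →+ F))

@[simp] theorem toF_zero : toF φ (0 : W F A T φ) = 0 := rfl

@[simp] theorem toF_add (x y : W F A T φ) : toF φ (x + y) = toF φ x + toF φ y := rfl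

@[simp] theorem toF_smul (c : F) (x : W F A T φ) : toF φ (c • x) = c • toF φ x := rfl

@[simp] theorem toF_sum {ι : Type*} (s : Finset ι) (x : ι → W F A T φ) :
    toF φ (∑ i ∈ s, x i) = ∑ i ∈ s, toF φ (x i) := rfl

@[simp] theorem toF_tt (α : A) (d : T) : toF φ (tt φ α d) = Finsupp.single α d := rfl

theorem tt_smul (α : A) (c : F) (v : T) : tt φ α (c • v) = c • tt φ α v :=
  (Finsupp.smul_single c α v).symm

theorem sum_tt_support (u : W F A T φ) :
    ∑ α ∈ (toF φ u).support, tt φ α (toF φ u α) = u :=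
  Finsupp.sum_single (toF φ u)

theorem exists_support_subset_of_fg {N : Submodule F (W F A T φ)} (hN : N.FG) :
    ∃ D : Finset A, ∀ y ∈ N, (toF φ y).support ⊆ D := by
  classical
  obtain ⟨G, rfl⟩ := hN
  refine ⟨G.biUnion fun g => (toF φ g).support, fun y hy => ?_⟩
  induction hy using Submodule.span_induction with
  | mem y hy => exact Finset.subset_biUnion_of_mem (fun g => (toF φ g).support) hy
  | zero => simp
  | add y z _ _ hy hz => exact Finsupp.support_add.trans (Finset.union_subset hy hz)
  | smul c y _ hy => exact Finsupp.support_smul.trans hy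

variable [CharZero F]

-- Stated with `W`'s own `Module` instance, to which the module structure underlying the
-- `LieAlgebra` instance is only defeq; this lets `map_add`, `map_smul`, `map_sum` apply to `θ`.
instance : LinearEquivClass (W F A T φ ≃ₗ⁅F⁆ W F A T φ) F (W F A T φ) (W F A T φ) where
  map_add e := e.toLinearEquiv.map_add
  map_smulₛₗ e := e.toLinearEquiv.map_smul

theorem toF_lie (x y : W F A T φ) : toF φ ⁅x, y⁆ = brk φ (toF φ x) (toF φ y) := rfl

theorem lie_tt_zero_tt (d : T) (α : A) (v : T) : ⁅tt φ 0 d, tt φ α v⁆ = φ d α • tt φ α v := by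
  rw [bracket_tt, zero_add, map_zero, zero_smul, sub_zero, tt_smul]

theorem toF_lie_tt_zero_apply (d : T) (y : W F A T φ) (γ : A) :
    toF φ ⁅tt φ 0 d, y⁆ γ = φ d γ • toF φ y γ := by
  classical
  rw [toF_lie, toF_tt, brk, Finsupp.sum_single_index (by simp)]
  simp only [zero_add, map_zero, zero_smul, sub_zero, Finsupp.sum_apply, Finsupp.single_apply,
    Finsupp.sum_ite_eq', Finsupp.mem_support_iff, ne_eq, ite_not]
  split_ifs with h <;> simp [h]

theorem toF_lie_apply [DecidableEq A] (x y : W F A T φ) (γ : A) :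
    toF φ ⁅x, y⁆ γ = ∑ α ∈ (toF φ x).support, ∑ β ∈ (toF φ y).support,
      if α + β = γ then φ (toF φ x α) β • toF φ y β - φ (toF φ y β) α • toF φ x α else 0 := by
  simp only [toF_lie, brk, Finsupp.sum, Finsupp.finsetSum_apply, Finsupp.single_apply]

theorem exists_add_eq_of_mem_support_lie {x y : W F A T φ} {γ : A}
    (hγ : γ ∈ (toF φ ⁅x, y⁆).support) :
    ∃ α ∈ (toF φ x).support, ∃ β ∈ (toF φ y).support, α + β = γ := by
  classical
  obtain ⟨α, hα, hγ⟩ := Finset.mem_biUnion.mp (Finsupp.support_sum hγ)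
  obtain ⟨β, hβ, hγ⟩ := Finset.mem_biUnion.mp (Finsupp.support_sum hγ)
  exact ⟨α, hα, β, hβ, (Finset.mem_singleton.mp (Finsupp.support_single_subset hγ)).symm⟩

theorem Nondeg.exists_injOn (hφ : Nondeg φ) (s : Finset A) : ∃ p : T, Set.InjOn (φ p) s := by
  classical
  let pairs := (s ×ˢ s).filter fun q => q.1 ≠ q.2
  let ev (δ : A) : Module.Dual F T :=
    { toFun := fun d => φ d δ, map_add' := by simp, map_smul' := by simp }
  obtain ⟨p, hp⟩ := Module.Dual.exists_forall_ne_zero_of_forall_exists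
    (fun q : pairs => ev (q.1.1 - q.1.2)) fun q => by
      by_contra! h
      exact (Finset.mem_filter.mp q.2).2 (sub_eq_zero.mp (hφ.1 _ h))
  refine ⟨p, fun a ha b hb hab => by_contra fun hne => hp ⟨(a, b), ?_⟩ ?_⟩
  · simp_all [pairs]
  · simp [ev, hab]

theorem Nondeg.exists_addMonoidHom_injOn (hφ : Nondeg φ) (s : Finset A) :
    ∃ L : A →+ ℚ, Set.InjOn L s := by
  classical
  obtain ⟨p, hp⟩ := hφ.exists_injOn φ s
  obtain ⟨ψ, hψ⟩ := Module.exists_dual_injOn (K := ℚ) (s.image (φ p))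
  exact ⟨ψ.toAddMonoidHom.comp (φ p),
    (hψ.mono (by simp)).comp hp (fun a ha => Set.mem_image_of_mem _ ha)⟩

theorem Nondeg.exists_forall_apply_add_nsmul_ne (hφ : Nondeg φ) {d : T} (hd : d ≠ 0) (β : A) :
    ∃ a : A, ∀ n : ℕ, φ d (a + n • β) ≠ φ d β := by
  by_cases hc : φ d β = 0
  · obtain ⟨a, ha⟩ : ∃ a, φ d a ≠ 0 := by
      by_contra! h
      exact hd (hφ.2 d h)
    exact ⟨a, fun n => by simpa [hc] using ha⟩
  · refine ⟨2 • β, fun n h => hc ?_⟩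
    rw [← add_nsmul, map_nsmul, nsmul_eq_mul] at h
    have : ((n : F) + 1) * φ d β = 0 := by push_cast at h; linear_combination h
    exact (mul_eq_zero.mp this).resolve_left (Nat.cast_add_one_ne_zero n)

theorem isAdLocallyFinite_tt_zero (d : T) : IsAdLocallyFinite F (tt φ 0 d) := by
  classical
  refine isAdLocallyFinite_of_mem_span_eigenvectors fun u => ?_
  set s := (toF φ u).support.image fun α => tt φ α (toF φ u α)
  refine ⟨s, ?_, fun y hy => ?_⟩
  · rw [← sum_tt_support φ u]
    exact Submodule.sum_mem _ fun α hα => Submodule.subset_span (Finset.mem_image_of_mem _ hα)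
  · obtain ⟨α, -, rfl⟩ := Finset.mem_image.mp hy
    exact ⟨_, lie_tt_zero_tt φ d α _⟩

section LeadingTerm

variable (L : A →+ ℚ) {x y : W F A T φ} {β₀ α : A}

theorem toF_lie_apply_add_of_strictMax (hx : ∀ γ ∈ (toF φ x).support, γ ≠ β₀ → L γ < L β₀)
    (hy : ∀ γ ∈ (toF φ y).support, L γ ≤ L α) :
    toF φ ⁅x, y⁆ (β₀ + α) =
      φ (toF φ x β₀) α • toF φ y α - φ (toF φ y α) β₀ • toF φ x β₀ := by
  classical
  rw [toF_lie_apply, Finset.sum_eq_single β₀, Finset.sum_eq_single α, if_pos rfl]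
  · intro β hβ hne
    exact if_neg fun h => hne (add_left_cancel h)
  · intro hα
    simp [Finsupp.notMem_support_iff.mp hα]
  · intro γ hγ hne
    refine Finset.sum_eq_zero fun β hβ => if_neg fun h => ?_
    have := congrArg L h
    rw [map_add, map_add] at this
    linarith [hx γ hγ hne, hy β hβ]
  · intro hβ₀
    simp [Finsupp.notMem_support_iff.mp hβ₀]

theorem apply_le_of_mem_support_lie (hx : ∀ γ ∈ (toF φ x).support, L γ ≤ L β₀)
    (hy : ∀ γ ∈ (toF φ y).support, L γ ≤ L α) :
    ∀ γ ∈ (toF φ ⁅x, y⁆).support, L γ ≤ L (β₀ + α) := by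
  intro γ hγ
  obtain ⟨γ₁, hγ₁, γ₂, hγ₂, rfl⟩ := exists_add_eq_of_mem_support_lie φ hγ
  rw [map_add, map_add]
  linarith [hx γ₁ hγ₁, hy γ₂ hγ₂]

end LeadingTerm

theorem not_isAdLocallyFinite_of_strictMax (hφ : Nondeg φ) (L : A →+ ℚ) {x : W F A T φ} {β₀ : A}
    (hβ₀ : β₀ ∈ (toF φ x).support) (hpos : 0 < L β₀)
    (hmax : ∀ γ ∈ (toF φ x).support, γ ≠ β₀ → L γ < L β₀) : ¬ IsAdLocallyFinite F x := by
  set d := toF φ x β₀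
  have hd : d ≠ 0 := Finsupp.mem_support_iff.mp hβ₀
  have hle : ∀ γ ∈ (toF φ x).support, L γ ≤ L β₀ := fun γ hγ =>
    (eq_or_ne γ β₀).elim (fun h => h ▸ le_rfl) fun h => (hmax γ hγ h).le
  obtain ⟨a, ha⟩ := hφ.exists_forall_apply_add_nsmul_ne φ hd β₀
  let v (n : ℕ) : W F A T φ := (⁅x, ·⁆)^[n] (tt φ a d)
  have hv (n : ℕ) : v (n + 1) = ⁅x, v n⁆ := Function.iterate_succ_apply' _ _ _
  have leading (n : ℕ) : (∀ γ ∈ (toF φ (v n)).support, L γ ≤ L (a + n • β₀)) ∧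
      ∃ c : F, c ≠ 0 ∧ toF φ (v n) (a + n • β₀) = c • d := by
    induction n with
    | zero =>
      refine ⟨fun γ hγ => ?_, 1, one_ne_zero, by simp [v]⟩
      rw [Finset.mem_singleton.mp (Finsupp.support_single_subset hγ), zero_smul, add_zero]
    | succ n ih =>
      obtain ⟨hsupp, c, hc, hval⟩ := ih
      have hdeg : a + (n + 1) • β₀ = β₀ + (a + n • β₀) := by rw [succ_nsmul]; abel
      refine ⟨?_, c * (φ d (a + n • β₀) - φ d β₀), mul_ne_zero hc (sub_ne_zero.mpr (ha n)), ?_⟩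
      · rw [hv, hdeg]
        exact apply_le_of_mem_support_lie φ L hle hsupp
      · rw [hv, hdeg, toF_lie_apply_add_of_strictMax φ L hmax hsupp, hval, map_smul,
          AddMonoidHom.smul_apply, smul_eq_mul]
        module
  have hinj : Function.Injective fun n : ℕ => a + n • β₀ := by
    intro m n h
    have := congrArg L h
    simp only [map_add, map_nsmul, nsmul_eq_mul, add_right_inj] at this
    exact_mod_cast mul_right_cancel₀ hpos.ne' this
  intro hfin
  obtain ⟨N, hN, haN, hNinv⟩ := hfin (tt φ a d)
  have hvN (n : ℕ) : v n ∈ N := by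
    induction n with
    | zero => exact haN
    | succ n ih => exact hv n ▸ hNinv _ ih
  obtain ⟨D, hD⟩ := exists_support_subset_of_fg φ hN
  refine Set.infinite_of_injective_forall_mem hinj (fun n => hD _ (hvN n) ?_) D.finite_toSet
  obtain ⟨c, hc, hval⟩ := (leading n).2
  rw [Finsupp.mem_support_iff, hval]
  exact smul_ne_zero hc hd

theorem isAdLocallyFinite_iff (hφ : Nondeg φ) (x : W F A T φ) :
    IsAdLocallyFinite F x ↔ (toF φ x).support ⊆ {0} := by
  classical
  refine ⟨fun hx β hβ => ?_, fun hx => ?_⟩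
  · by_contra hβ0
    obtain ⟨L, hL⟩ := hφ.exists_addMonoidHom_injOn φ (insert 0 (toF φ x).support)
    obtain ⟨L', β₀, hβ₀, hpos, hmax⟩ :=
      AddMonoidHom.exists_pos_strictMax (by simpa using hL) hβ (by simpa using hβ0)
    exact not_isAdLocallyFinite_of_strictMax φ hφ L' hβ₀ hpos hmax hx
  · rw [show x = tt φ 0 (toF φ x 0) from Finsupp.support_subset_singleton.mp hx]
    exact isAdLocallyFinite_tt_zero φ _

theorem exists_lieEquiv_apply_tt_zero (hφ : Nondeg φ) (θ : W F A T φ ≃ₗ⁅F⁆ W F A T φ) (d : T) :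
    ∃ d' : T, θ (tt φ 0 d) = tt φ 0 d' :=
  ⟨_, Finsupp.support_subset_singleton.mp <| (isAdLocallyFinite_iff φ hφ _).mp <|
    (isAdLocallyFinite_tt_zero φ d).map θ⟩

theorem toF_lieEquiv_tt_apply_zero (hφ : Nondeg φ) (θ : W F A T φ ≃ₗ⁅F⁆ W F A T φ) {β : A}
    (hβ : β ≠ 0) (v : T) : toF φ (θ (tt φ β v)) 0 = 0 := by
  obtain ⟨d, hd⟩ : ∃ d, φ d β ≠ 0 := by
    by_contra! h
    exact hβ (hφ.1 β h)
  obtain ⟨d', hd'⟩ := exists_lieEquiv_apply_tt_zero φ hφ θ d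
  rw [← inv_smul_smul₀ hd (tt φ β v), ← lie_tt_zero_tt, map_smul, LieEquiv.map_lie, hd', toF_smul,
    Finsupp.smul_apply, toF_lie_tt_zero_apply, map_zero, zero_smul, smul_zero]

theorem lieEquiv_apply_tt_eq_of_fixes (hφ : Nondeg φ) (θ : W F A T φ ≃ₗ⁅F⁆ W F A T φ) {p : T}
    {e : W F A T φ} (he : toF φ e 0 = 0) (hp : Set.InjOn (φ p) (toF φ e).support)
    (hθ : θ (tt φ 0 p + e) = tt φ 0 p + e) :
    ∀ β ∈ (toF φ e).support, θ (tt φ β (toF φ e β)) = tt φ β (toF φ e β) := by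
  have hθe : θ e = ∑ β ∈ (toF φ e).support, θ (tt φ β (toF φ e β)) := by
    rw [← map_sum, sum_tt_support]
  have hθp : θ (tt φ 0 p) = tt φ 0 p := by
    obtain ⟨p', hp'⟩ := exists_lieEquiv_apply_tt_zero φ hφ θ p
    have h0 := congrArg (fun z => toF φ z 0) hθ
    simp only [map_add, hp', hθe, toF_add, toF_sum, Finsupp.add_apply, Finsupp.finsetSum_apply,
      toF_tt, Finsupp.single_eq_same, he, add_zero] at h0
    rw [Finset.sum_eq_zero fun β hβ => toF_lieEquiv_tt_apply_zero φ hφ θ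
      (fun h => Finsupp.mem_support_iff.mp hβ (h ▸ he)) _, add_zero] at h0
    rw [hp', h0]
  have hθe' : θ e = e := add_left_cancel (by rw [← map_add, hθ, hθp])
  refine eqOn_of_sum_eq_of_lie_eq_smul (tt φ 0 p) hp (fun β _ => ?_)
    (fun β _ => lie_tt_zero_tt φ p β _) (hθe.symm.trans (hθe'.trans (sum_tt_support φ e).symm))
  rw [← hθp, ← LieEquiv.map_lie, lie_tt_zero_tt]
  exact map_smul θ _ _

theorem lieEquiv_apply_tt_eq_of_lie {θ : W F A T φ ≃ₗ⁅F⁆ W F A T φ} {α γ : A} {v : T}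
    (hv : φ v (α - γ - γ) ≠ 0) (h₁ : θ (tt φ γ v) = tt φ γ v)
    (h₂ : θ (tt φ (α - γ) v) = tt φ (α - γ) v) : θ (tt φ α v) = tt φ α v := by
  have hlie : ⁅tt φ γ v, tt φ (α - γ) v⁆ = φ v (α - γ - γ) • tt φ α v := by
    rw [bracket_tt, add_sub_cancel, ← tt_smul, ← sub_smul, ← map_sub (φ v)]
  have := congrArg θ hlie
  rw [LieEquiv.map_lie, h₁, h₂, hlie, map_smul] at this
  exact (smul_right_injective _ hv this).symm

theorem Nondeg.exists_fresh_split (hφ : Nondeg φ) {v : T} (hv : v ≠ 0) (α : A) (E : Finset A) :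
    ∃ γ : A, γ ∉ E ∧ α - γ ∉ E ∧ φ v (α - γ - γ) ≠ 0 := by
  classical
  obtain ⟨γ₀, hγ₀⟩ : ∃ γ₀, φ v γ₀ ≠ 0 := by
    by_contra! h
    exact hv (hφ.2 v h)
  have hinf : (Set.range (φ v)).Infinite :=
    Set.infinite_of_injective_forall_mem (f := fun n : ℕ => φ v (n • γ₀))
      (fun m n h => by simpa [hγ₀] using h) fun n => ⟨_, rfl⟩
  obtain ⟨_, ⟨γ, rfl⟩, hγ⟩ := hinf.exists_notMem_finset
    (E.image (φ v) ∪ E.image (fun ε => φ v α - φ v ε) ∪ {φ v α / 2})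
  simp only [Finset.mem_union, Finset.mem_image, Finset.mem_singleton, not_or, not_exists,
    not_and] at hγ
  obtain ⟨⟨h₁, h₂⟩, h₃⟩ := hγ
  refine ⟨γ, fun h => h₁ γ h rfl, fun h => h₂ _ h (by rw [map_sub]; ring), fun h => h₃ ?_⟩
  rw [map_sub, map_sub] at h
  linear_combination -h / 2

theorem Nondeg.exists_splitting_element (hφ : Nondeg φ) (P : Finset (A × T))
    (hP : ∀ q ∈ P, q.2 ≠ 0) :
    ∃ e : W F A T φ, toF φ e 0 = 0 ∧ ∀ q ∈ P, ∃ γ : A,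
      toF φ e γ = q.2 ∧ toF φ e (q.1 - γ) = q.2 ∧ φ q.2 (q.1 - γ - γ) ≠ 0 := by
  classical
  induction P using Finset.induction_on with
  | empty => exact ⟨0, rfl, by simp⟩
  | insert q P _ ih =>
    obtain ⟨e, he0, he⟩ := ih fun q' hq' => hP q' (Finset.mem_insert_of_mem hq')
    obtain ⟨γ, hγ, hγ', hφγ⟩ := hφ.exists_fresh_split φ (hP q (Finset.mem_insert_self q P)) q.1
      (insert 0 (toF φ e).support)
    have hne : q.1 - γ ≠ γ := fun h => hφγ (by rw [h, sub_self, map_zero])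
    let e' := e + tt φ γ q.2 + tt φ (q.1 - γ) q.2
    have he' : ∀ β ∈ insert 0 (toF φ e).support, toF φ e' β = toF φ e β := by
      intro β hβ
      simp [e', show γ ≠ β by rintro rfl; exact hγ hβ,
        show q.1 - γ ≠ β by rintro rfl; exact hγ' hβ]
    have hmem {β : A} {t : T} (h : toF φ e β = t) (ht : t ≠ 0) : β ∈ insert 0 (toF φ e).support :=
      Finset.mem_insert_of_mem (Finsupp.mem_support_iff.mpr (h ▸ ht))
    refine ⟨e', by rw [he' 0 (Finset.mem_insert_self _ _), he0], fun q' hq' => ?_⟩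
    rcases Finset.mem_insert.mp hq' with rfl | hq'
    · have he₀ (β : A) (hβ : β ∉ insert 0 (toF φ e).support) : toF φ e β = 0 :=
        Finsupp.notMem_support_iff.mp fun h => hβ (Finset.mem_insert_of_mem h)
      refine ⟨γ, ?_, ?_, hφγ⟩
      · simp [e', he₀ γ hγ, hne]
      · simp [e', he₀ _ hγ', hne.symm]
    · obtain ⟨γ', h₁, h₂, h₃⟩ := he q' hq'
      have hq'0 := hP q' (Finset.mem_insert_of_mem hq')
      exact ⟨γ', by rw [he' _ (hmem h₁ hq'0), h₁], by rw [he' _ (hmem h₂ hq'0), h₂], h₃⟩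

theorem exists_forall_lieEquiv_fixed (hφ : Nondeg φ) (s : Finset (W F A T φ)) :
    ∃ w : W F A T φ, ∀ θ : W F A T φ ≃ₗ⁅F⁆ W F A T φ, θ w = w → ∀ x ∈ s, θ x = x := by
  classical
  let P := s.biUnion fun x => (toF φ x).graph
  have hP (q : A × T) (hq : q ∈ P) : q.2 ≠ 0 := by
    obtain ⟨x, -, hq⟩ := Finset.mem_biUnion.mp hq
    exact (Finsupp.mem_graph_iff.mp hq).2
  obtain ⟨e, he0, hsplit⟩ := hφ.exists_splitting_element φ P hP
  obtain ⟨p, hp⟩ := hφ.exists_injOn φ (toF φ e).support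
  refine ⟨tt φ 0 p + e, fun θ hθ x hx => ?_⟩
  have hfixe := lieEquiv_apply_tt_eq_of_fixes φ hφ θ he0 hp hθ
  have hfixP (q : A × T) (hq : q ∈ P) : θ (tt φ q.1 q.2) = tt φ q.1 q.2 := by
    obtain ⟨γ, h₁, h₂, h₃⟩ := hsplit q hq
    have hsupp {β : A} (h : toF φ e β = q.2) : β ∈ (toF φ e).support :=
      Finsupp.mem_support_iff.mpr (h ▸ hP q hq)
    exact lieEquiv_apply_tt_eq_of_lie φ h₃ (h₁ ▸ hfixe γ (hsupp h₁))
      (h₂ ▸ hfixe _ (hsupp h₂))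
  rw [← sum_tt_support φ x, map_sum]
  exact Finset.sum_congr rfl fun α hα => hfixP (α, toF φ x α) <|
    Finset.mem_biUnion.mpr ⟨x, hx, Finsupp.mem_graph_iff.mpr ⟨rfl, Finsupp.mem_support_iff.mp hα⟩⟩

end GW

theorem GW.bijective_twoLocalAut_is_aut_general
    {F : Type*} [Field F] [CharZero F]
    {A : Type*} [AddCommGroup A]
    {T : Type*} [AddCommGroup T] [Module F T]
    (φ : T →ₗ[F] (A →+ F))
    (hφ : GW.Nondeg φ)
    (Φ : GW.W F A T φ → GW.W F A T φ) (hbij : Function.Bijective Φ)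
    (h2loc : ∀ x y : GW.W F A T φ,
      ∃ θ : GW.W F A T φ ≃ₗ⁅F⁆ GW.W F A T φ, Φ x = θ x ∧ Φ y = θ y) :
    ∃ θ : GW.W F A T φ ≃ₗ⁅F⁆ GW.W F A T φ, ⇑θ = Φ :=
  LieAlgebra.exists_lieEquiv_coe_eq_of_twoLocal (GW.exists_forall_lieEquiv_fixed φ hφ) h2loc hbij

/-- Theorem 3.2: every bijective `2`-local automorphism of a simple
generalized Witt algebra `W(A,T,φ)` over a field of characteristic `0` is an
automorphism. -/
theorem GW.bijective_twoLocalAut_is_aut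
    {F : Type*} [Field F] [CharZero F]
    {A : Type*} [AddCommGroup A]
    {T : Type*} [AddCommGroup T] [Module F T]
    (φ : T →ₗ[F] (A →+ F))
    (hA : Nontrivial A) (hφ : GW.Nondeg φ)
    (Φ : GW.W F A T φ → GW.W F A T φ) (hbij : Function.Bijective Φ)
    (h2loc : ∀ x y : GW.W F A T φ,
      ∃ θ : GW.W F A T φ ≃ₗ⁅F⁆ GW.W F A T φ, Φ x = θ x ∧ Φ y = θ y) :
    ∃ θ : GW.W F A T φ ≃ₗ⁅F⁆ GW.W F A T φ, ⇑θ = Φ :=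
  GW.bijective_twoLocalAut_is_aut_general φ hφ Φ hbij h2loc
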